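/- arXiv:2208.00354 — 2 statements merged into one kernel-verified Lean document; each statement's English description precedes it below -/
import Mathlib

section
/- If K is compact and there exists q ∈ ℝ[x]_A with q > 0 on K, then the truncated moment cone R_A(K) is closed. -/
open MeasureTheory Finset

/-- The monomial `x^α` for an exponent vector `α : Fin n → ℕ`. -/
noncomputable def mono {n : ℕ} (α : Fin n → ℕ) (x : Fin n → ℝ) : ℝ := ∏ i, x i ^ α i

/-- The polynomial with coefficient vector `c` supported on the finite power set `A`. -/
noncomputable def polyA {n : ℕ} (A : Finset (Fin n → ℕ)) (c : A → ℝ) (x : Fin n → ℝ) : ℝ :=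
  ∑ α : A, c α * mono (α : Fin n → ℕ) x

/-- The truncated moment cone `R_A(K)`: those `y ∈ ℝ^A` admitting a positive Borel
representing measure supported in `K`. -/
def momCone {n : ℕ} (A : Finset (Fin n → ℕ)) (K : Set (Fin n → ℝ)) : Set (A → ℝ) :=
  {y | ∃ μ : Measure (Fin n → ℝ), μ Kᶜ = 0 ∧
      (∀ α : A, Integrable (mono (α : Fin n → ℕ)) μ) ∧
      (∀ α : A, y α = ∫ x, mono (α : Fin n → ℕ) x ∂μ)}

/-! Let `v(x) = (x^α)_{α ∈ A}` and let `C` be the convex hull of `v(K)`, which is compact since `K`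
is. The linear form `ℓ_q y = q ⬝ᵥ y` satisfies `ℓ_q ∘ v ≥ ε > 0` on `K`, so a representing measure
`μ` of `y` has finite mass, and `y` is the mass of `μ` times the `μ`-average of `v`, a point of `C`.
Hence `R_A(K) = {0} ∪ ℝ≥0 • C`. On the level set `ℓ_q < T` the scaling factors are at most `T / ε`,
so this cone is locally the image of the compact set `[0, T / ε] × C`, hence closed. -/

open Pointwise

theorem convexHull_eq_image_stdSimplex {E : Type*} [NormedAddCommGroup E] [NormedSpace ℝ E]
    [FiniteDimensional ℝ E] (s : Set E) :
    convexHull ℝ s =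
      (fun p : (Fin (Module.finrank ℝ E + 1) → ℝ) × (Fin (Module.finrank ℝ E + 1) → E) =>
        ∑ i, p.1 i • p.2 i) '' (stdSimplex ℝ _ ×ˢ Set.univ.pi fun _ => s) := by
  refine Set.Subset.antisymm (fun x hx => ?_) ?_
  · obtain ⟨z₀, hz₀⟩ := convexHull_nonempty_iff.mp ⟨x, hx⟩
    obtain ⟨ι, _, z, w, hzs, hind, hw0, hw1, hwz⟩ := eq_pos_convex_span_of_mem_convexHull hx
    have hcard : Fintype.card ι ≤ Fintype.card (Fin (Module.finrank ℝ E + 1)) := by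
      simpa using hind.card_le_finrank_succ.trans (Nat.succ_le_succ (Submodule.finrank_le _))
    -- Carathéodory uses at most `finrank + 1` points; pad with zero weights along `e`.
    obtain ⟨e⟩ := Function.Embedding.nonempty_of_card_le hcard
    have hw : ∀ a, Function.extend e w 0 (e a) = w a := e.injective.extend_apply _ _
    have hw' : ∀ i ∉ Set.range e, Function.extend e w 0 i = 0 := fun i hi =>
      Function.extend_apply' (f := e) _ _ _ hi
    have hz : ∀ a, Function.extend e z (fun _ => z₀) (e a) = z a := e.injective.extend_apply _ _
    have hz' : ∀ i ∉ Set.range e, Function.extend e z (fun _ => z₀) i = z₀ := fun i hi =>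
      Function.extend_apply' (f := e) _ _ _ hi
    refine ⟨(Function.extend e w 0, Function.extend e z fun _ => z₀),
      ⟨⟨fun i => ?_, ?_⟩, fun i _ => ?_⟩, ?_⟩
    · by_cases hi : i ∈ Set.range e
      · obtain ⟨a, rfl⟩ := hi
        exact (hw a).ge.trans' (hw0 a).le
      · exact (hw' i hi).ge
    · rw [← hw1]
      exact (Fintype.sum_of_injective e e.injective w _ hw' fun a => (hw a).symm).symm
    · by_cases hi : i ∈ Set.range e
      · obtain ⟨a, rfl⟩ := hi
        simpa only [hz] using hzs (Set.mem_range_self a)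
      · simpa only [hz' i hi] using hz₀
    · rw [← hwz]
      refine (Fintype.sum_of_injective e e.injective _ _ (fun i hi => ?_) fun a => ?_).symm
      · simp only [hw' i hi, zero_smul]
      · simp only [hw, hz]
  · rintro _ ⟨p, ⟨hp, hps⟩, rfl⟩
    exact (convex_convexHull ℝ s).sum_mem (fun i _ => hp.1 i) hp.2
      fun i _ => subset_convexHull ℝ s (hps i trivial)

theorem IsCompact.convexHull_of_finiteDimensional {E : Type*} [NormedAddCommGroup E]
    [NormedSpace ℝ E] [FiniteDimensional ℝ E] {s : Set E} (hs : IsCompact s) :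
    IsCompact (convexHull ℝ s) := by
  rw [convexHull_eq_image_stdSimplex]
  exact ((isCompact_stdSimplex ℝ _).prod (isCompact_univ_pi fun _ => hs)).image <|
    continuous_finsetSum _ fun i _ =>
      ((continuous_apply i).comp continuous_fst).smul ((continuous_apply i).comp continuous_snd)

theorem isClosed_Ici_smul_of_isCompact {E : Type*} [AddCommGroup E] [Module ℝ E]
    [TopologicalSpace E] [ContinuousSMul ℝ E] [T2Space E] {C : Set E} (hC : IsCompact C)
    (ℓ : E →L[ℝ] ℝ) (hℓ : ∀ c ∈ C, 0 < ℓ c) : IsClosed (Set.Ici (0 : ℝ) • C) := by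
  obtain ⟨ε, hε, hεC⟩ := hC.exists_forall_le' ℓ.continuous.continuousOn hℓ
  refine closure_subset_iff_isClosed.mp fun y hy => ?_
  set T := ℓ y + 1
  have hbound : {z | ℓ z < T} ∩ Set.Ici (0 : ℝ) • C ⊆ Set.Icc 0 (T / ε) • C := by
    rintro _ ⟨hz, t, (ht : 0 ≤ t), c, hc, rfl⟩
    refine ⟨t, ⟨ht, ?_⟩, c, hc, rfl⟩
    rw [le_div_iff₀ hε]
    calc t * ε ≤ t * ℓ c := mul_le_mul_of_nonneg_left (hεC c hc) ht
      _ = ℓ (t • c) := by rw [map_smul, smul_eq_mul]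
      _ ≤ T := le_of_lt hz
  have hcpt : IsCompact (Set.Icc 0 (T / ε) • C) := isCompact_Icc.smul_set hC
  have hyT : y ∈ closure (Set.Icc 0 (T / ε) • C) :=
    closure_mono hbound <| (isOpen_lt ℓ.continuous continuous_const).inter_closure
      ⟨by simp [T], hy⟩
  rw [hcpt.isClosed.closure_eq] at hyT
  exact Set.smul_subset_smul_right Set.Icc_subset_Ici_self hyT

theorem isFiniteMeasure_of_integrable_of_ae_le {α : Type*} [MeasurableSpace α] {μ : Measure α}
    {f : α → ℝ} {ε : ℝ} (hf : Integrable f μ) (hε : 0 < ε) (hfε : ∀ᵐ x ∂μ, ε ≤ f x) :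
    IsFiniteMeasure μ := by
  have hnorm : {x | ε ≤ ‖f x‖} =ᵐ[μ] Set.univ :=
    ae_eq_univ.mpr <| mem_ae_iff.mp <| hfε.mono fun x hx => hx.trans (le_abs_self _)
  exact ⟨(measure_congr hnorm).symm.trans_lt (hf.measure_norm_ge_lt_top hε)⟩

section momentCone

variable {n : ℕ} (A : Finset (Fin n → ℕ)) (K : Set (Fin n → ℝ))

theorem continuous_mono (α : Fin n → ℕ) : Continuous (mono α) :=
  continuous_finsetProd _ fun i _ => (continuous_apply i).pow _

-- `polyA A q x` is definitionally `q ⬝ᵥ momentVector A x`.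
noncomputable def momentVector (x : Fin n → ℝ) : A → ℝ := fun α => mono (α : Fin n → ℕ) x

theorem continuous_momentVector : Continuous (momentVector A) :=
  continuous_pi fun _ => continuous_mono _

theorem zero_mem_momCone : (0 : A → ℝ) ∈ momCone A K :=
  ⟨0, rfl, fun _ => integrable_zero_measure, fun _ => by simp⟩

theorem add_mem_momCone {y₁ y₂ : A → ℝ} (h₁ : y₁ ∈ momCone A K) (h₂ : y₂ ∈ momCone A K) :
    y₁ + y₂ ∈ momCone A K := by
  obtain ⟨μ₁, hμ₁, hint₁, hmom₁⟩ := h₁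
  obtain ⟨μ₂, hμ₂, hint₂, hmom₂⟩ := h₂
  refine ⟨μ₁ + μ₂, by simp [hμ₁, hμ₂], fun α => (hint₁ α).add_measure (hint₂ α), fun α => ?_⟩
  rw [integral_add_measure (hint₁ α) (hint₂ α), Pi.add_apply, hmom₁, hmom₂]

theorem smul_mem_momCone {y : A → ℝ} {t : ℝ} (ht : 0 ≤ t) (h : y ∈ momCone A K) :
    t • y ∈ momCone A K := by
  obtain ⟨μ, hμ, hint, hmom⟩ := h
  refine ⟨ENNReal.ofReal t • μ, by simp [hμ],
    fun α => (hint α).smul_measure ENNReal.ofReal_ne_top, fun α => ?_⟩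
  rw [integral_smul_measure, ENNReal.toReal_ofReal ht, Pi.smul_apply, hmom]

theorem convex_momCone : Convex ℝ (momCone A K) :=
  fun _ h₁ _ h₂ _ _ ha hb _ => add_mem_momCone A K (smul_mem_momCone A K ha h₁)
    (smul_mem_momCone A K hb h₂)

theorem momentVector_mem_momCone {x : Fin n → ℝ} (hx : x ∈ K) :
    momentVector A x ∈ momCone A K := by
  refine ⟨Measure.dirac x, by simp [Measure.dirac_apply, hx],
    fun _ => integrable_dirac enorm_lt_top,
    fun α => (integral_dirac (mono (α : Fin n → ℕ)) x).symm⟩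

theorem Ici_smul_convexHull_subset_momCone :
    Set.Ici (0 : ℝ) • convexHull ℝ (momentVector A '' K) ⊆ momCone A K := by
  rintro _ ⟨t, (ht : 0 ≤ t), c, hc, rfl⟩
  refine smul_mem_momCone A K ht (convexHull_min ?_ (convex_momCone A K) hc)
  rintro _ ⟨x, hx, rfl⟩
  exact momentVector_mem_momCone A K hx

theorem continuous_polyA (q : A → ℝ) : Continuous (polyA A q) :=
  continuous_const.dotProduct (continuous_momentVector A)

theorem momCone_subset_insert_zero (hK : IsCompact K) (q : A → ℝ)
    (hq : ∀ x ∈ K, 0 < polyA A q x) :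
    momCone A K ⊆ insert 0 (Set.Ici (0 : ℝ) • convexHull ℝ (momentVector A '' K)) := by
  rintro y ⟨μ, hμK, hint, hmom⟩
  have hKμ : ∀ᵐ x ∂μ, x ∈ K := mem_ae_iff.mpr hμK
  obtain ⟨ε, hε, hεK⟩ := hK.exists_forall_le' (continuous_polyA A q).continuousOn hq
  have hqint : Integrable (polyA A q) μ :=
    integrable_finsetSum _ fun α _ => (hint α).const_mul (q α)
  have := isFiniteMeasure_of_integrable_of_ae_le hqint hε (hKμ.mono hεK)
  have hy : y = ∫ x, momentVector A x ∂μ :=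
    funext fun α => (hmom α).trans (eval_integral hint α).symm
  rcases eq_or_ne μ 0 with rfl | hμ
  · left
    simp [hy]
  · have : NeZero μ := ⟨hμ⟩
    right
    refine ⟨μ.real Set.univ, measureReal_nonneg, _, ?_, (measure_smul_average μ _).trans hy.symm⟩
    exact (convex_convexHull ℝ _).average_mem
      (hK.image (continuous_momentVector A)).convexHull_of_finiteDimensional.isClosed
      (hKμ.mono fun x hx => subset_convexHull ℝ _ (Set.mem_image_of_mem _ hx))
      (integrable_pi_iff.mpr hint)

theorem momCone_eq_insert_zero (hK : IsCompact K) (q : A → ℝ)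
    (hq : ∀ x ∈ K, 0 < polyA A q x) :
    momCone A K = insert 0 (Set.Ici (0 : ℝ) • convexHull ℝ (momentVector A '' K)) :=
  (momCone_subset_insert_zero A K hK q hq).antisymm <|
    Set.insert_subset (zero_mem_momCone A K) (Ici_smul_convexHull_subset_momCone A K)

theorem dotProduct_pos_of_mem_convexHull (q : A → ℝ) (hq : ∀ x ∈ K, 0 < polyA A q x)
    {c : A → ℝ} (hc : c ∈ convexHull ℝ (momentVector A '' K)) : 0 < q ⬝ᵥ c :=
  convexHull_min (t := {c | 0 < q ⬝ᵥ c}) (Set.image_subset_iff.mpr hq)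
    (convex_halfSpace_gt (dotProductBilin ℝ ℝ q).isLinear 0) hc

end momentCone

/-- if `K` is compact and some polynomial supported on `A` is strictly positive
on `K`, then the truncated moment cone `R_A(K)` is closed. -/
theorem stmt3 {n : ℕ} (A : Finset (Fin n → ℕ)) (K : Set (Fin n → ℝ)) (hK : IsCompact K)
    (q : A → ℝ) (hq : ∀ x ∈ K, 0 < polyA A q x) :
    IsClosed (momCone A K) := by
  let ℓ : (A → ℝ) →L[ℝ] ℝ := LinearMap.toContinuousLinearMap (dotProductBilin ℝ ℝ q)
  have hℓ : ∀ c ∈ convexHull ℝ (momentVector A '' K), 0 < ℓ c := fun c hc => by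
    simpa [ℓ] using dotProduct_pos_of_mem_convexHull A K q hq hc
  rw [momCone_eq_insert_zero A K hK q hq, Set.insert_eq]
  exact isClosed_singleton.union <| isClosed_Ici_smul_of_isCompact
    (hK.image (continuous_momentVector A)).convexHull_of_finiteDimensional ℓ hℓ
end

section
/- Suppose K is closed at infinity. Then for a degree d > 0, the interior of the cone P_d(K) of polynomials of degree at most d nonnegative on K equals {p ∈ ℝ[x]_d : p > 0 on K and the degree-d homogeneous part p^{(d)} is strictly positive on K^e}, where K^e = {x : c_i^hm(x)=0 (i∈E), c_j^hm(x)≥0 (j∈I), ‖x‖²=1} with c^hm the top-degree homogeneous part of c. -/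
open MvPolynomial

/-- Evaluation at `(x₀, x)` of the homogenization `p̃(x₀,x) = x₀^{deg p} p(x/x₀)` of `p`,
given by `∑_α p_α x₀^{deg p − |α|} x^α`. -/
noncomputable def homEval {n : ℕ} (p : MvPolynomial (Fin n) ℝ) (x₀ : ℝ) (x : Fin n → ℝ) : ℝ :=
  ∑ α ∈ p.support, p.coeff α * x₀ ^ (p.totalDegree - α.sum fun _ e => e) * ∏ i, x i ^ α i

/-- The semialgebraic set `K = {x : c_i(x) = 0 (i ∈ E), c_j(x) ≥ 0 (j ∈ I)}`. -/
def semiSet {n : ℕ} {ι : Type*} (E I : Set ι) (g : ι → MvPolynomial (Fin n) ℝ) :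
    Set (Fin n → ℝ) :=
  {x | (∀ i ∈ E, eval x (g i) = 0) ∧ (∀ j ∈ I, 0 ≤ eval x (g j))}

/-- The homogenized cone `K̃^c` with strictly positive `x₀`-coordinate. -/
def tildeC {n : ℕ} {ι : Type*} (E I : Set ι) (g : ι → MvPolynomial (Fin n) ℝ) :
    Set (ℝ × (Fin n → ℝ)) :=
  {z | 0 < z.1 ∧ (∀ i ∈ E, homEval (g i) z.1 z.2 = 0) ∧ (∀ j ∈ I, 0 ≤ homEval (g j) z.1 z.2)}

/-- The homogenized cone `K̃^h` with nonnegative `x₀`-coordinate. -/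
def tildeH {n : ℕ} {ι : Type*} (E I : Set ι) (g : ι → MvPolynomial (Fin n) ℝ) :
    Set (ℝ × (Fin n → ℝ)) :=
  {z | 0 ≤ z.1 ∧ (∀ i ∈ E, homEval (g i) z.1 z.2 = 0) ∧ (∀ j ∈ I, 0 ≤ homEval (g j) z.1 z.2)}

/-- `K` is closed at infinity: `cl(K̃^c) = K̃^h`. -/
def closedAtInfty {n : ℕ} {ι : Type*} (E I : Set ι) (g : ι → MvPolynomial (Fin n) ℝ) : Prop :=
  closure (tildeC E I g) = tildeH E I g

/-- The compact homogenized set `K̃ = K̃^h ∩ {x₀² + ‖x‖² = 1}`. -/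
def tildeK {n : ℕ} {ι : Type*} (E I : Set ι) (g : ι → MvPolynomial (Fin n) ℝ) :
    Set (ℝ × (Fin n → ℝ)) :=
  tildeH E I g ∩ {z | z.1 ^ 2 + ∑ i, z.2 i ^ 2 = 1}

/-- The exponents of the monomials of total degree at most `d` in `n` variables. -/
def expSet (n d : ℕ) : Finset (Fin n → ℕ) :=
  (Fintype.piFinset fun _ : Fin n => Finset.range (d + 1)).filter fun α => ∑ i, α i ≤ d

/-- The polynomial in `ℝ[x]_d` with coefficient vector `c`. -/
noncomputable def polyD {n d : ℕ} (c : expSet n d → ℝ) (x : Fin n → ℝ) : ℝ :=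
  ∑ α : expSet n d, c α * mono (α : Fin n → ℕ) x

/-- The degree-`d` homogeneous part `p^{(d)}` of the polynomial with coefficients `c`. -/
noncomputable def topPartD {n d : ℕ} (c : expSet n d → ℝ) (x : Fin n → ℝ) : ℝ :=
  ∑ α : expSet n d,
    if (∑ i, (α : Fin n → ℕ) i) = d then c α * mono (α : Fin n → ℕ) x else 0

/-- The set `K^e` of directions at infinity: common zeros/nonnegativity of the top-degree
homogeneous parts of the constraints, on the unit sphere. -/
def dirSet {n : ℕ} {ι : Type*} (E I : Set ι) (g : ι → MvPolynomial (Fin n) ℝ) :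
    Set (Fin n → ℝ) :=
  {x | (∀ i ∈ E, eval x (homogeneousComponent (g i).totalDegree (g i)) = 0) ∧
       (∀ j ∈ I, 0 ≤ eval x (homogeneousComponent (g j).totalDegree (g j))) ∧
       ∑ i, x i ^ 2 = 1}


/-
Homogenize `p ∈ ℝ[x]_d` to the form `p̃(x₀, x) = x₀^d p(x/x₀)` on `ℝ × ℝⁿ`, so that
`p̃(1, x) = p(x)` and `p̃(0, x) = p^{(d)}(x)`. Every point of the compact set `K̃` is a positive
multiple of `(1, x)` with `x ∈ K` or of `(0, x)` with `x ∈ K^e`, so the right-hand side is the set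
of `p` with `p̃ > 0` on `K̃`; by compactness this set is open, and it lies in `P_d(K)`, hence in its
interior. Conversely, closedness at infinity makes `p̃ ≥ 0` on `K̃^h = cl(K̃^c)` for every
`p ∈ P_d(K)`; if `p` is interior and `z ∈ K̃`, then `p - δq ∈ P_d(K)` for small `δ > 0` and a `q`
with `q̃(z) > 0`, whence `p̃(z) ≥ δ q̃(z) > 0`.
-/

open Set Filter Topology

lemma isOpen_setOf_forall_pos {X Y : Type*} [TopologicalSpace X] [TopologicalSpace Y]
    {K : Set Y} (hK : IsCompact K) {f : X → Y → ℝ} (hf : Continuous (Function.uncurry f)) :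
    IsOpen {x | ∀ y ∈ K, 0 < f x y} :=
  isOpen_iff_mem_nhds.mpr fun _ hx => hK.eventually_forall_of_forall_eventually fun y hy =>
    hf.continuousAt.eventually (lt_mem_nhds (hx y hy))

noncomputable def homPolyD {n d : ℕ} (c : expSet n d → ℝ) (z : ℝ × (Fin n → ℝ)) : ℝ :=
  ∑ α : expSet n d, c α * z.1 ^ (d - ∑ i, (α : Fin n → ℕ) i) * mono (α : Fin n → ℕ) z.2

section Homogenization

variable {n d : ℕ}

lemma sum_le_of_mem_expSet (α : expSet n d) : ∑ i, (α : Fin n → ℕ) i ≤ d :=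
  (Finset.mem_filter.mp α.2).2

lemma mono_smul (t : ℝ) (α : Fin n → ℕ) (x : Fin n → ℝ) :
    mono α (t • x) = t ^ (∑ i, α i) * mono α x := by
  simp [mono, mul_pow, Finset.prod_mul_distrib, Finset.prod_pow_eq_pow_sum]

lemma homPolyD_one (c : expSet n d → ℝ) (x : Fin n → ℝ) : homPolyD c (1, x) = polyD c x := by
  simp [homPolyD, polyD]

lemma homPolyD_zero (c : expSet n d → ℝ) (x : Fin n → ℝ) :
    homPolyD c (0, x) = topPartD c x := by
  refine Finset.sum_congr rfl fun α _ => ?_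
  rcases eq_or_ne (∑ i, (α : Fin n → ℕ) i) d with h | h
  · simp [h]
  · have : d - ∑ i, (α : Fin n → ℕ) i ≠ 0 := by have := sum_le_of_mem_expSet α; omega
    simp [h, zero_pow this]

lemma homPolyD_smul_right (c : expSet n d → ℝ) (t : ℝ) (z : ℝ × (Fin n → ℝ)) :
    homPolyD c (t • z) = t ^ d * homPolyD c z := by
  simp only [homPolyD, Finset.mul_sum, Prod.smul_fst, Prod.smul_snd, smul_eq_mul, mono_smul]
  refine Finset.sum_congr rfl fun α _ => ?_
  rw [mul_pow, ← pow_sub_mul_pow t (sum_le_of_mem_expSet α)]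
  ring

lemma homPolyD_of_ne_zero (c : expSet n d → ℝ) {t : ℝ} (ht : t ≠ 0) (w : Fin n → ℝ) :
    homPolyD c (t, w) = t ^ d * polyD c (t⁻¹ • w) := by
  rw [← homPolyD_one, ← homPolyD_smul_right]
  simp [ht]

lemma homPolyD_smul_left (v : ℝ) (c : expSet n d → ℝ) (z : ℝ × (Fin n → ℝ)) :
    homPolyD (v • c) z = v * homPolyD c z := by
  simp only [homPolyD, Finset.mul_sum, Pi.smul_apply, smul_eq_mul, mul_assoc]

lemma homPolyD_sub (c e : expSet n d → ℝ) (z : ℝ × (Fin n → ℝ)) :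
    homPolyD (c - e) z = homPolyD c z - homPolyD e z := by
  simp only [homPolyD, ← Finset.sum_sub_distrib, Pi.sub_apply, sub_mul]

lemma continuous_homPolyD : Continuous (Function.uncurry (homPolyD (n := n) (d := d))) := by
  unfold Function.uncurry homPolyD mono
  fun_prop

lemma homPolyD_single (α : expSet n d) (z : ℝ × (Fin n → ℝ)) :
    homPolyD (Pi.single α 1) z = z.1 ^ (d - ∑ i, (α : Fin n → ℕ) i) * mono (α : Fin n → ℕ) z.2 := by
  classical
  rw [homPolyD, Finset.sum_eq_single α (fun β _ hβ => by simp [hβ]) (by simp)]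
  simp

lemma pi_single_mem_expSet (i : Fin n) : Pi.single i d ∈ expSet n d := by
  simp only [expSet, Finset.mem_filter, Fintype.mem_piFinset, Finset.mem_range,
    Finset.sum_pi_single']
  refine ⟨fun j => ?_, by simp⟩
  rcases eq_or_ne j i with rfl | h <;> simp [*]

lemma zero_mem_expSet : (0 : Fin n → ℕ) ∈ expSet n d := by
  simp [expSet]

lemma exists_homPolyD_single_ne_zero {z : ℝ × (Fin n → ℝ)} (hz : z ≠ 0) :
    ∃ α : expSet n d, homPolyD (Pi.single α 1) z ≠ 0 := by
  by_cases h₁ : z.1 = 0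
  · obtain ⟨i, hi⟩ : ∃ i, z.2 i ≠ 0 := Function.ne_iff.mp fun h₂ => hz (Prod.ext h₁ h₂)
    refine ⟨⟨Pi.single i d, pi_single_mem_expSet i⟩, ?_⟩
    rw [homPolyD_single]
    dsimp only
    rw [mono, Finset.prod_eq_single i (fun j _ hj => by rw [Pi.single_eq_of_ne hj, pow_zero])
      (by simp)]
    simp [h₁, hi]
  · exact ⟨⟨0, zero_mem_expSet⟩, by simp [homPolyD_single, mono, h₁]⟩

lemma exists_homPolyD_pos {z : ℝ × (Fin n → ℝ)} (hz : z ≠ 0) :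
    ∃ e : expSet n d → ℝ, 0 < homPolyD e z := by
  obtain ⟨α, hα⟩ := exists_homPolyD_single_ne_zero (d := d) hz
  exact ⟨homPolyD (Pi.single α 1) z • Pi.single α 1,
    by rw [homPolyD_smul_left]; exact mul_self_pos.mpr hα⟩

end Homogenization

section Constraints

variable {n : ℕ}

lemma homEval_smul (p : MvPolynomial (Fin n) ℝ) (t : ℝ) (x : Fin n → ℝ) :
    homEval p t (t • x) = t ^ p.totalDegree * eval x p := by
  rw [homEval, eval_eq', Finset.mul_sum]
  refine Finset.sum_congr rfl fun α hα => ?_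
  have hdeg : (α.sum fun _ e => e) = ∑ i, α i := Finsupp.sum_fintype _ _ fun _ => rfl
  simp only [Pi.smul_apply, smul_eq_mul, mul_pow, Finset.prod_mul_distrib,
    Finset.prod_pow_eq_pow_sum]
  rw [← pow_sub_mul_pow t (le_totalDegree hα), hdeg]
  ring

lemma homEval_of_ne_zero (p : MvPolynomial (Fin n) ℝ) {t : ℝ} (ht : t ≠ 0) (w : Fin n → ℝ) :
    homEval p t w = t ^ p.totalDegree * eval (t⁻¹ • w) p := by
  rw [← homEval_smul, smul_inv_smul₀ ht]

lemma homEval_zero (p : MvPolynomial (Fin n) ℝ) (x : Fin n → ℝ) :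
    homEval p 0 x = eval x (homogeneousComponent p.totalDegree p) := by
  rw [homogeneousComponent_apply, map_sum, Finset.sum_filter]
  refine Finset.sum_congr rfl fun α hα => ?_
  have hle : (α.sum fun _ e => e) ≤ p.totalDegree := le_totalDegree hα
  have hdeg : α.degree = α.sum fun _ e => e := rfl
  rw [eval_monomial, Finsupp.prod_pow]
  rcases eq_or_ne (α.sum fun _ e => e) p.totalDegree with h | h
  · simp [hdeg, h]
  · have : p.totalDegree - (α.sum fun _ e => e) ≠ 0 := by omega
    simp [hdeg, h, zero_pow this]

lemma continuous_homEval (p : MvPolynomial (Fin n) ℝ) :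
    Continuous fun z : ℝ × (Fin n → ℝ) => homEval p z.1 z.2 := by
  unfold homEval
  fun_prop

variable {ι : Type*} {E I : Set ι} {g : ι → MvPolynomial (Fin n) ℝ}

lemma isClosed_tildeH : IsClosed (tildeH E I g) := by
  simp only [tildeH, ofPred_and, ofPred_forall]
  exact (isClosed_le continuous_const continuous_fst).inter <|
    (isClosed_iInter fun i => isClosed_iInter fun _ =>
      isClosed_eq (continuous_homEval (g i)) continuous_const).inter <|
    isClosed_iInter fun j => isClosed_iInter fun _ =>
      isClosed_le continuous_const (continuous_homEval (g j))

lemma isCompact_tildeK : IsCompact (tildeK E I g) := by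
  refine Metric.isCompact_of_isClosed_isBounded
    (isClosed_tildeH.inter (isClosed_eq (by fun_prop) continuous_const))
    ((Metric.isBounded_closedBall (x := 0) (r := 1)).subset ?_)
  rintro z ⟨-, hsph⟩
  have hsum : 0 ≤ ∑ j, z.2 j ^ 2 := Finset.sum_nonneg fun j _ => sq_nonneg (z.2 j)
  have hcoord (i : Fin n) : z.2 i ^ 2 ≤ ∑ j, z.2 j ^ 2 :=
    Finset.single_le_sum (fun j _ => sq_nonneg (z.2 j)) (Finset.mem_univ i)
  rw [mem_closedBall_zero_iff, Prod.norm_def]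
  refine max_le ?_ ((pi_norm_le_iff_of_nonneg zero_le_one).mpr fun i => ?_) <;>
    rw [Real.norm_eq_abs, ← sq_le_one_iff_abs_le_one]
  · linarith [hsph.symm]
  · nlinarith [hsph.symm, hcoord i, sq_nonneg z.1]

lemma mem_semiSet_of_mem_tildeC {w : ℝ × (Fin n → ℝ)} (hw : w ∈ tildeC E I g) :
    w.1⁻¹ • w.2 ∈ semiSet E I g := by
  obtain ⟨hw₁, hwE, hwI⟩ := hw
  refine ⟨fun i hi => ?_, fun j hj => ?_⟩
  · have h := hwE i hi
    rw [homEval_of_ne_zero _ hw₁.ne'] at h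
    exact (mul_eq_zero.mp h).resolve_left (pow_ne_zero _ hw₁.ne')
  · have h := hwI j hj
    rw [homEval_of_ne_zero _ hw₁.ne'] at h
    exact (mul_nonneg_iff_of_pos_left (pow_pos hw₁ _)).mp h

lemma smul_mem_tildeK_of_mem_semiSet {x : Fin n → ℝ} (hx : x ∈ semiSet E I g) :
    (√(1 + ∑ i, x i ^ 2))⁻¹ • ((1 : ℝ), x) ∈ tildeK E I g := by
  set r := √(1 + ∑ i, x i ^ 2)
  have hpos : (0 : ℝ) < 1 + ∑ i, x i ^ 2 := by positivity
  have hr : 0 < r := Real.sqrt_pos.mpr hpos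
  have hr2 : r ^ 2 = 1 + ∑ i, x i ^ 2 := Real.sq_sqrt hpos.le
  refine ⟨⟨by simp [hr.le], fun i hi => ?_, fun j hj => ?_⟩, ?_⟩
  · simp [homEval_smul, hx.1 i hi]
  · simpa [homEval_smul] using mul_nonneg (pow_nonneg (inv_nonneg.mpr hr.le) _) (hx.2 j hj)
  · simp only [mem_ofPred_eq, Prod.smul_fst, Prod.smul_snd, Pi.smul_apply, smul_eq_mul, mul_pow,
      ← Finset.mul_sum, mul_one]
    field_simp
    linarith

lemma mk_zero_mem_tildeK_iff {x : Fin n → ℝ} : ((0 : ℝ), x) ∈ tildeK E I g ↔ x ∈ dirSet E I g := by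
  simp [tildeK, tildeH, dirSet, homEval_zero, and_assoc]

end Constraints

section Interior

variable {n d : ℕ} {ι : Type*} {E I : Set ι} {g : ι → MvPolynomial (Fin n) ℝ}

lemma forall_homPolyD_pos_iff (c : expSet n d → ℝ) :
    (∀ z ∈ tildeK E I g, 0 < homPolyD c z) ↔
      (∀ x ∈ semiSet E I g, 0 < polyD c x) ∧ ∀ x ∈ dirSet E I g, 0 < topPartD c x := by
  constructor
  · intro hc
    refine ⟨fun x hx => ?_, fun x hx => ?_⟩
    · have h := hc _ (smul_mem_tildeK_of_mem_semiSet hx)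
      rw [homPolyD_smul_right, homPolyD_one] at h
      exact pos_of_mul_pos_right h (by positivity)
    · simpa [homPolyD_zero] using hc _ (mk_zero_mem_tildeK_iff.mpr hx)
  · rintro ⟨hK, hdir⟩ ⟨z₀, w⟩ hz
    rcases hz.1.1.eq_or_lt with rfl | hz₀
    · simpa [homPolyD_zero] using hdir w (mk_zero_mem_tildeK_iff.mp hz)
    · rw [homPolyD_of_ne_zero c hz₀.ne']
      exact mul_pos (pow_pos hz₀ d) (hK _ (mem_semiSet_of_mem_tildeC ⟨hz₀, hz.1.2⟩))

lemma homPolyD_nonneg_of_closedAtInfty (hinf : closedAtInfty E I g) {c : expSet n d → ℝ}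
    (hc : ∀ x ∈ semiSet E I g, 0 ≤ polyD c x) {z : ℝ × (Fin n → ℝ)} (hz : z ∈ tildeH E I g) :
    0 ≤ homPolyD c z := by
  rw [closedAtInfty] at hinf
  rw [← hinf] at hz
  refine closure_minimal (fun w hw => ?_)
    (isClosed_le continuous_const (continuous_homPolyD.uncurry_left c)) hz
  show 0 ≤ homPolyD c (w.1, w.2)
  rw [homPolyD_of_ne_zero c hw.1.ne']
  exact mul_nonneg (pow_nonneg hw.1.le d) (hc _ (mem_semiSet_of_mem_tildeC hw))

lemma homPolyD_pos_of_mem_interior (hinf : closedAtInfty E I g) {c : expSet n d → ℝ}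
    (hc : c ∈ interior {c : expSet n d → ℝ | ∀ x ∈ semiSet E I g, 0 ≤ polyD c x})
    {z : ℝ × (Fin n → ℝ)} (hz : z ∈ tildeK E I g) : 0 < homPolyD c z := by
  have hz₀ : z ≠ 0 := by rintro rfl; simpa using hz.2
  obtain ⟨e, he⟩ := exists_homPolyD_pos (d := d) hz₀
  have hnear : ∀ᶠ δ in 𝓝 (0 : ℝ),
      c - δ • e ∈ {c : expSet n d → ℝ | ∀ x ∈ semiSet E I g, 0 ≤ polyD c x} :=
    (show Continuous fun δ : ℝ => c - δ • e by fun_prop).continuousAt.eventually_mem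
      (by simpa using mem_interior_iff_mem_nhds.mp hc)
  obtain ⟨δ, hδc, hδ⟩ := ((hnear.filter_mono nhdsWithin_le_nhds).and
    (self_mem_nhdsWithin : Ioi (0 : ℝ) ∈ 𝓝[>] 0)).exists
  have := homPolyD_nonneg_of_closedAtInfty hinf hδc hz.1
  rw [homPolyD_sub, homPolyD_smul_left] at this
  nlinarith [mul_pos (mem_Ioi.mp hδ) he]

end Interior

theorem stmt10_general {n d : ℕ} {ι : Type*} (E I : Set ι) (g : ι → MvPolynomial (Fin n) ℝ)
    (hinf : closedAtInfty E I g) :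
    interior {c : expSet n d → ℝ | ∀ x ∈ semiSet E I g, 0 ≤ polyD c x} =
      {c : expSet n d → ℝ |
        (∀ x ∈ semiSet E I g, 0 < polyD c x) ∧ ∀ x ∈ dirSet E I g, 0 < topPartD c x} := by
  have hpos : {c : expSet n d → ℝ |
      (∀ x ∈ semiSet E I g, 0 < polyD c x) ∧ ∀ x ∈ dirSet E I g, 0 < topPartD c x} =
      {c | ∀ z ∈ tildeK E I g, 0 < homPolyD c z} :=
    ext fun c => (forall_homPolyD_pos_iff c).symm
  rw [hpos]
  refine Subset.antisymm (fun c hc z hz => homPolyD_pos_of_mem_interior hinf hc hz) ?_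
  exact interior_maximal (fun c hc x hx => ((forall_homPolyD_pos_iff c).mp hc).1 x hx |>.le)
    (isOpen_setOf_forall_pos isCompact_tildeK continuous_homPolyD)

/-- if `K` is closed at infinity and `d > 0`, then
`int(P_d(K)) = {p ∈ ℝ[x]_d : p > 0 on K and p^{(d)} > 0 on K^e}`. -/
theorem stmt10 {n d : ℕ} {ι : Type*} (E I : Set ι) (g : ι → MvPolynomial (Fin n) ℝ)
    (hd : 0 < d) (hinf : closedAtInfty E I g) :
    interior {c : expSet n d → ℝ | ∀ x ∈ semiSet E I g, 0 ≤ polyD c x} =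
      {c : expSet n d → ℝ |
        (∀ x ∈ semiSet E I g, 0 < polyD c x) ∧ ∀ x ∈ dirSet E I g, 0 < topPartD c x} :=
  stmt10_general E I g hinf
end
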